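/- arXiv:1410.1718 — 4 statements merged into one kernel-verified Lean document; each statement's English description precedes it below -/
import Mathlib

section
/- Let I = [a,b] be a nondegenerate compact real interval, let ψ : I → [0,1] be a continuous, monotone increasing surjection, and let f : I → I and g : [0,1] → [0,1] satisfy ψ ∘ f = g ∘ ψ. Suppose there exist points a = t_0 < t_1 < ⋯ < t_m = b such that f is continuous and monotone on each open interval (t_{i-1}, t_i). Then there exist points 0 = s_0 < s_1 < ⋯ < s_k = 1 with k ≤ m such that g is continuous and monotone on each open interval (s_{j-1}, s_j); in particular, g is piecewise monotone with at most as many laps as f. -/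
open Set

/-- A monotone function on an open interval with the intermediate value property is
continuous there. -/
lemma lemA {u v : ℝ} {G : ℝ → ℝ} (hm : MonotoneOn G (Ioo u v))
    (hivp : ∀ y1 ∈ Ioo u v, ∀ y2 ∈ Ioo u v, y1 ≤ y2 →
      ∀ c ∈ uIcc (G y1) (G y2), ∃ y ∈ Icc y1 y2, G y = c) :
    ContinuousOn G (Ioo u v) := by
  intro y0 hy0
  have hnh : Ioo u v ∈ nhds y0 := isOpen_Ioo.mem_nhds hy0
  have hright : ContinuousWithinAt G (Ici y0) y0 := by
    by_cases hc : ∃ y' ∈ Ioo u v, y0 < y' ∧ G y' = G y0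
    · obtain ⟨y', hy', hlt, heq⟩ := hc
      have hev : G =ᶠ[nhdsWithin y0 (Ici y0)] fun _ => G y0 := by
        filter_upwards [Ico_mem_nhdsGE_of_mem (⟨le_refl y0, hlt⟩ : y0 ∈ Ico y0 y')] with y hy
        have hyIoo : y ∈ Ioo u v := ⟨hy0.1.trans_le hy.1, hy.2.trans hy'.2⟩
        exact le_antisymm (heq ▸ hm hyIoo hy' hy.2.le) (hm hy0 hyIoo hy.1)
      exact Filter.Tendsto.congr' hev.symm tendsto_const_nhds
    · push_neg at hc
      refine continuousWithinAt_right_of_monotoneOn_of_exists_between hm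
        (nhdsWithin_le_nhds hnh) fun b hb => ?_
      obtain ⟨y', hy'1, hy'2⟩ := exists_between hy0.2
      have hy'm : y' ∈ Ioo u v := ⟨hy0.1.trans hy'1, hy'2⟩
      have hGlt : G y0 < G y' :=
        lt_of_le_of_ne (hm hy0 hy'm hy'1.le) (fun h => hc y' hy'm hy'1 h.symm)
      obtain ⟨c0, hc01, hc02⟩ := exists_between (lt_min hb hGlt)
      have hcu : c0 ∈ uIcc (G y0) (G y') := by
        rw [uIcc_of_le (hm hy0 hy'm hy'1.le)]
        exact ⟨hc01.le, (hc02.trans_le (min_le_right _ _)).le⟩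
      obtain ⟨y, hy, hGy⟩ := hivp y0 hy0 y' hy'm hy'1.le c0 hcu
      exact ⟨y, ⟨hy0.1.trans_le hy.1, hy.2.trans_lt hy'2⟩,
        hGy ▸ ⟨hc01, hc02.trans_le (min_le_left _ _)⟩⟩
  have hleft : ContinuousWithinAt G (Iic y0) y0 := by
    by_cases hc : ∃ y' ∈ Ioo u v, y' < y0 ∧ G y' = G y0
    · obtain ⟨y', hy', hlt, heq⟩ := hc
      have hev : G =ᶠ[nhdsWithin y0 (Iic y0)] fun _ => G y0 := by
        filter_upwards [Ioc_mem_nhdsLE_of_mem (⟨hlt, le_refl y0⟩ : y0 ∈ Ioc y' y0)] with y hy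
        have hyIoo : y ∈ Ioo u v := ⟨hy'.1.trans hy.1, lt_of_le_of_lt hy.2 hy0.2⟩
        exact le_antisymm (hm hyIoo hy0 hy.2) (heq ▸ hm hy' hyIoo hy.1.le)
      exact Filter.Tendsto.congr' hev.symm tendsto_const_nhds
    · push_neg at hc
      refine continuousWithinAt_left_of_monotoneOn_of_exists_between hm
        (nhdsWithin_le_nhds hnh) fun b hb => ?_
      obtain ⟨y', hy'1, hy'2⟩ := exists_between hy0.1
      have hy'm : y' ∈ Ioo u v := ⟨hy'1, hy'2.trans hy0.2⟩
      have hGlt : G y' < G y0 :=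
        lt_of_le_of_ne (hm hy'm hy0 hy'2.le) (fun h => hc y' hy'm hy'2 h)
      obtain ⟨c0, hc01, hc02⟩ := exists_between (max_lt hb hGlt)
      have hcu : c0 ∈ uIcc (G y') (G y0) := by
        rw [uIcc_of_le (hm hy'm hy0 hy'2.le)]
        exact ⟨((le_max_right _ _).trans_lt hc01).le, hc02.le⟩
      obtain ⟨y, hy, hGy⟩ := hivp y' hy'm y0 hy0 hy'2.le c0 hcu
      exact ⟨y, ⟨hy'1.trans_le hy.1, hy.2.trans_lt hy0.2⟩,
        hGy ▸ ⟨(le_max_left _ _).trans_lt hc01, hc02⟩⟩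
  exact (continuousAt_iff_continuous_left_right.2 ⟨hleft, hright⟩).continuousWithinAt


lemma lemG {a b p q : ℝ} {f g ψ : ℝ → ℝ}
    (hψc : ContinuousOn ψ (Icc a b)) (hψm : MonotoneOn ψ (Icc a b))
    (hf : MapsTo f (Icc a b) (Icc a b))
    (hsemi : ∀ x ∈ Icc a b, ψ (f x) = g (ψ x))
    (hp : p ∈ Icc a b) (hq : q ∈ Icc a b) (hpq : p ≤ q)
    (hfc : ContinuousOn f (Ioo p q))
    (hfm : MonotoneOn f (Ioo p q) ∨ AntitoneOn f (Ioo p q)) :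
    ContinuousOn g (Ioo (ψ p) (ψ q)) ∧
      (MonotoneOn g (Ioo (ψ p) (ψ q)) ∨ AntitoneOn g (Ioo (ψ p) (ψ q))) := by
  have hIccsub : Icc p q ⊆ Icc a b := Icc_subset_Icc hp.1 hq.2
  have hIoosub : Ioo p q ⊆ Icc a b := Ioo_subset_Icc_self.trans hIccsub
  have sec : ∀ y ∈ Ioo (ψ p) (ψ q), ∃ x ∈ Ioo p q, ψ x = y := by
    intro y hy
    obtain ⟨x, hx, hxy⟩ := intermediate_value_Ioo hpq (hψc.mono hIccsub) hy
    exact ⟨x, hx, hxy⟩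
  have secle : ∀ {y1 y2 x1 x2 : ℝ}, y1 < y2 → x1 ∈ Ioo p q → x2 ∈ Ioo p q →
      ψ x1 = y1 → ψ x2 = y2 → x1 < x2 := by
    intro y1 y2 x1 x2 h12 hx1 hx2 he1 he2
    by_contra h
    push_neg at h
    have := hψm (hIoosub hx2) (hIoosub hx1) h
    rw [he1, he2] at this
    exact absurd this (not_le.2 h12)
  have hhc : ContinuousOn (fun x => ψ (f x)) (Ioo p q) :=
    hψc.comp hfc (fun x hx => hf (hIoosub hx))
  -- IVP for g
  have ivp : ∀ y1 ∈ Ioo (ψ p) (ψ q), ∀ y2 ∈ Ioo (ψ p) (ψ q), y1 ≤ y2 →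
      ∀ c ∈ uIcc (g y1) (g y2), ∃ y ∈ Icc y1 y2, g y = c := by
    intro y1 hy1 y2 hy2 h12 c hc
    rcases eq_or_lt_of_le h12 with rfl | hlt
    · simp only [uIcc_self, mem_singleton_iff] at hc
      exact ⟨y1, ⟨le_refl _, le_refl _⟩, hc.symm⟩
    · obtain ⟨x1, hx1, he1⟩ := sec y1 hy1
      obtain ⟨x2, hx2, he2⟩ := sec y2 hy2
      have hx12 : x1 < x2 := secle hlt hx1 hx2 he1 he2
      have hsub2 : uIcc x1 x2 ⊆ Ioo p q := by
        rw [uIcc_of_le hx12.le]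
        intro x hx
        exact ⟨lt_of_lt_of_le hx1.1 hx.1, lt_of_le_of_lt hx.2 hx2.2⟩
      have hc' : c ∈ uIcc (ψ (f x1)) (ψ (f x2)) := by
        rw [hsemi x1 (hIoosub hx1), hsemi x2 (hIoosub hx2), he1, he2]
        exact hc
      obtain ⟨x, hx, hxc⟩ := intermediate_value_uIcc (hhc.mono hsub2) hc'
      have hxm : x ∈ Ioo p q := hsub2 hx
      rw [uIcc_of_le hx12.le] at hx
      refine ⟨ψ x, ⟨?_, ?_⟩, ?_⟩
      · rw [← he1]; exact hψm (hIoosub hx1) (hIoosub hxm) hx.1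
      · rw [← he2]; exact hψm (hIoosub hxm) (hIoosub hx2) hx.2
      · rw [← hsemi x (hIoosub hxm)]; exact hxc
  rcases hfm with hmono | hanti
  · have gmono : MonotoneOn g (Ioo (ψ p) (ψ q)) := by
      intro y1 hy1 y2 hy2 h12
      rcases eq_or_lt_of_le h12 with rfl | hlt
      · exact le_refl _
      obtain ⟨x1, hx1, he1⟩ := sec y1 hy1
      obtain ⟨x2, hx2, he2⟩ := sec y2 hy2
      have hx12 : x1 < x2 := secle hlt hx1 hx2 he1 he2
      rw [← he1, ← he2, ← hsemi x1 (hIoosub hx1), ← hsemi x2 (hIoosub hx2)]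
      exact hψm (hf (hIoosub hx1)) (hf (hIoosub hx2)) (hmono hx1 hx2 hx12.le)
    exact ⟨lemA gmono ivp, Or.inl gmono⟩
  · have ganti : AntitoneOn g (Ioo (ψ p) (ψ q)) := by
      intro y1 hy1 y2 hy2 h12
      rcases eq_or_lt_of_le h12 with rfl | hlt
      · exact le_refl _
      obtain ⟨x1, hx1, he1⟩ := sec y1 hy1
      obtain ⟨x2, hx2, he2⟩ := sec y2 hy2
      have hx12 : x1 < x2 := secle hlt hx1 hx2 he1 he2
      rw [← he1, ← he2, ← hsemi x1 (hIoosub hx1), ← hsemi x2 (hIoosub hx2)]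
      exact hψm (hf (hIoosub hx2)) (hf (hIoosub hx1)) (hanti hx1 hx2 hx12.le)
    have gmono' : MonotoneOn (fun y => -(g y)) (Ioo (ψ p) (ψ q)) :=
      fun y1 h1 y2 h2 h12 => neg_le_neg (ganti h1 h2 h12)
    have ivp' : ∀ y1 ∈ Ioo (ψ p) (ψ q), ∀ y2 ∈ Ioo (ψ p) (ψ q), y1 ≤ y2 →
        ∀ c ∈ uIcc (-(g y1)) (-(g y2)), ∃ y ∈ Icc y1 y2, -(g y) = c := by
      intro y1 hy1 y2 hy2 h12 c hc
      have hc2 : -c ∈ uIcc (g y1) (g y2) := by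
        rw [mem_uIcc] at hc ⊢
        rcases hc with ⟨h1, h2⟩ | ⟨h1, h2⟩
        · exact Or.inr ⟨by linarith, by linarith⟩
        · exact Or.inl ⟨by linarith, by linarith⟩
      obtain ⟨y, hy, hgy⟩ := ivp y1 hy1 y2 hy2 h12 (-c) hc2
      exact ⟨y, hy, by rw [hgy]; ring⟩
    have hcont := lemA gmono' ivp'
    have : ContinuousOn (fun y => -(-(g y))) (Ioo (ψ p) (ψ q)) := hcont.neg
    refine ⟨?_, Or.inr ganti⟩
    simpa using this

lemma lemB : ∀ (m : ℕ) (v : ℕ → ℝ), (∀ i < m, v i ≤ v (i + 1)) →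
    ∃ k ≤ m, ∃ s : ℕ → ℝ, s 0 = v 0 ∧ s k = v m ∧ (∀ j < k, s j < s (j + 1)) ∧
      (∀ j < k, ∃ i < m, s j = v i ∧ s (j + 1) = v (i + 1)) := by
  intro m
  induction m with
  | zero =>
    intro v _
    exact ⟨0, le_refl 0, v, rfl, rfl, fun j hj => absurd hj (Nat.not_lt_zero j),
      fun j hj => absurd hj (Nat.not_lt_zero j)⟩
  | succ n ih =>
    intro v hv
    obtain ⟨k, hk, s, hs0, hsk, hinc, hint⟩ := ih v (fun i hi => hv i (by omega))
    by_cases hcase : v n = v (n + 1)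
    · exact ⟨k, by omega, s, hs0, by rw [hsk, hcase], hinc,
        fun j hj => by obtain ⟨i, hi, h⟩ := hint j hj; exact ⟨i, by omega, h⟩⟩
    · have hlt : v n < v (n + 1) := lt_of_le_of_ne (hv n (by omega)) hcase
      refine ⟨k + 1, by omega, fun j => if j ≤ k then s j else v (n + 1), ?_, ?_, ?_, ?_⟩
      · simp [hs0]
      · show (if k+1 ≤ k then s (k+1) else v (n+1)) = v (n+1)
        rw [if_neg (by omega)]
      · intro j hj
        rcases Nat.lt_or_ge j k with h | h
        · show (if j ≤ k then s j else v (n+1)) < (if j+1 ≤ k then s (j+1) else v (n+1))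
          rw [if_pos (by omega), if_pos (by omega)]
          exact hinc j h
        · have hjk : j = k := by omega
          subst hjk
          show (if j ≤ j then s j else v (n+1)) < (if j+1 ≤ j then s (j+1) else v (n+1))
          rw [if_pos (le_refl j), if_neg (by omega), hsk]
          exact hlt
      · intro j hj
        rcases Nat.lt_or_ge j k with h | h
        · obtain ⟨i, hi, h1, h2⟩ := hint j h
          exact ⟨i, by omega, by show (if j ≤ k then s j else v (n+1)) = v i; rw [if_pos (by omega)]; exact h1,
            by show (if j+1 ≤ k then s (j+1) else v (n+1)) = v (i+1); rw [if_pos (by omega)]; exact h2⟩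
        · have hjk : j = k := by omega
          subst hjk
          exact ⟨n, by omega, by show (if j ≤ j then s j else v (n+1)) = v n; rw [if_pos (le_refl j), hsk],
            by show (if j+1 ≤ j then s (j+1) else v (n+1)) = v (n+1); rw [if_neg (by omega)]⟩

/-- If `ψ : I → [0,1]` is a continuous monotone increasing surjection
semiconjugating `f : I → I` to `g : [0,1] → [0,1]`, and `f` is piecewise monotone with
partition points `a = t_0 < t_1 < ⋯ < t_m = b` (continuous and monotone on each open
piece), then `g` is piecewise monotone with at most `m` laps, i.e. there are points
`0 = s_0 < s_1 < ⋯ < s_k = 1` with `k ≤ m` such that `g` is continuous and monotone on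
each open interval `(s_{j-1}, s_j)`. -/
theorem stmt_1 {a b : ℝ} (hab : a < b) (f g ψ : ℝ → ℝ)
    (hψc : ContinuousOn ψ (Icc a b))
    (hψm : MonotoneOn ψ (Icc a b))
    (hψmaps : MapsTo ψ (Icc a b) (Icc 0 1))
    (hψsurj : SurjOn ψ (Icc a b) (Icc 0 1))
    (hf : MapsTo f (Icc a b) (Icc a b))
    (hg : MapsTo g (Icc 0 1) (Icc 0 1))
    (hsemi : ∀ x ∈ Icc a b, ψ (f x) = g (ψ x))
    (m : ℕ) (t : ℕ → ℝ) (hm : 0 < m)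
    (ht0 : t 0 = a) (htm : t m = b)
    (htlt : ∀ i < m, t i < t (i + 1))
    (hlap : ∀ i < m, ContinuousOn f (Ioo (t i) (t (i + 1))) ∧
      (MonotoneOn f (Ioo (t i) (t (i + 1))) ∨ AntitoneOn f (Ioo (t i) (t (i + 1))))) :
    ∃ (k : ℕ) (s : ℕ → ℝ), 0 < k ∧ k ≤ m ∧ s 0 = 0 ∧ s k = 1 ∧
      (∀ j < k, s j < s (j + 1)) ∧
      ∀ j < k, ContinuousOn g (Ioo (s j) (s (j + 1))) ∧
        (MonotoneOn g (Ioo (s j) (s (j + 1))) ∨ AntitoneOn g (Ioo (s j) (s (j + 1)))) := by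
  -- monotonicity of t
  have key : ∀ j, j ≤ m → ∀ i, i ≤ j → t i ≤ t j := by
    intro j
    induction j with
    | zero => intro _ i hi; rw [Nat.le_zero.mp hi]
    | succ n ih =>
      intro hn i hi
      rcases Nat.lt_or_ge i (n + 1) with h | h
      · exact le_trans (ih (by omega) i (by omega)) (htlt n (by omega)).le
      · have : i = n + 1 := by omega
        rw [this]
  have htmem : ∀ i, i ≤ m → t i ∈ Icc a b := fun i hi =>
    ⟨ht0 ▸ key i hi 0 (Nat.zero_le i), htm ▸ key m (le_refl m) i hi⟩
  -- endpoint values of ψ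
  have hψa : ψ a = 0 := by
    obtain ⟨x, hx, hx0⟩ := hψsurj (⟨le_refl (0:ℝ), zero_le_one⟩ : (0:ℝ) ∈ Icc 0 1)
    have h1 : ψ a ≤ ψ x := hψm ⟨le_refl a, hab.le⟩ hx hx.1
    have h2 : 0 ≤ ψ a := (hψmaps ⟨le_refl a, hab.le⟩).1
    rw [hx0] at h1
    linarith
  have hψb : ψ b = 1 := by
    obtain ⟨x, hx, hx1⟩ := hψsurj (⟨zero_le_one, le_refl (1:ℝ)⟩ : (1:ℝ) ∈ Icc 0 1)
    have h1 : ψ x ≤ ψ b := hψm hx ⟨hab.le, le_refl b⟩ hx.2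
    have h2 : ψ b ≤ 1 := (hψmaps ⟨hab.le, le_refl b⟩).2
    rw [hx1] at h1
    linarith
  -- apply dedup lemma to the values ψ (t i)
  set v : ℕ → ℝ := fun i => ψ (t (min i m)) with hv_def
  have hv : ∀ i < m, v i ≤ v (i + 1) := by
    intro i hi
    have h1 : min i m = i := min_eq_left (by omega)
    have h2 : min (i + 1) m = i + 1 := min_eq_left (by omega)
    simp only [hv_def, h1, h2]
    exact hψm (htmem i (by omega)) (htmem (i + 1) (by omega)) (htlt i hi).le
  obtain ⟨k, hk, s, hs0, hsk, hinc, hint⟩ := lemB m v hv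
  have hs0' : s 0 = 0 := by
    simp only [hv_def, Nat.min_self, min_eq_left (Nat.zero_le m), ht0, hψa] at hs0
    simpa using hs0
  have hsk' : s k = 1 := by
    simp only [hv_def, Nat.min_self, htm, hψb] at hsk
    exact hsk
  have hk0 : 0 < k := by
    rcases Nat.eq_zero_or_pos k with h | h
    · rw [h] at hsk'
      rw [hs0'] at hsk'
      norm_num at hsk'
    · exact h
  refine ⟨k, s, hk0, hk, hs0', hsk', hinc, ?_⟩
  intro j hj
  obtain ⟨i, hi, h1, h2⟩ := hint j hj
  have hm1 : min i m = i := min_eq_left (by omega)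
  have hm2 : min (i + 1) m = i + 1 := min_eq_left (by omega)
  simp only [hv_def, hm1] at h1
  simp only [hv_def, hm2] at h2
  rw [h1, h2]
  exact lemG hψc hψm hf hsemi (htmem i (by omega)) (htmem (i + 1) (by omega))
    (htlt i hi).le (hlap i hi).1 (hlap i hi).2
end

section
/- Let I = [a,b] be a nondegenerate compact real interval and let f : I → I be a map for which some point x₀ ∈ I has dense forward orbit {f^n(x₀) : n ≥ 0} in I. Let ψ : I → [0,1] be a continuous, monotone increasing surjection and let g : [0,1] → [0,1] be a map satisfying ψ ∘ f = g ∘ ψ. Then ψ is injective; consequently ψ is an increasing homeomorphism of I onto [0,1] and it conjugates f with g. -/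
open Set

/-- if `f : I → I` has a point `x₀` with dense forward orbit, `ψ : I → [0,1]`
is a continuous monotone increasing surjection and `g : [0,1] → [0,1]` satisfies
`ψ ∘ f = g ∘ ψ`, then `ψ` is injective on `I`; consequently `ψ` is a (strictly
increasing) homeomorphism of `I` onto `[0,1]`, so it conjugates `f` with `g`. -/
theorem stmt_8 {a b : ℝ} (hab : a < b) (f g ψ : ℝ → ℝ)
    (hf : MapsTo f (Icc a b) (Icc a b))
    (hg : MapsTo g (Icc 0 1) (Icc 0 1))
    (x₀ : ℝ) (hx₀ : x₀ ∈ Icc a b)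
    (hdense : Icc a b ⊆ closure (Set.range fun n : ℕ => f^[n] x₀))
    (hψc : ContinuousOn ψ (Icc a b))
    (hψm : MonotoneOn ψ (Icc a b))
    (hψmaps : MapsTo ψ (Icc a b) (Icc 0 1))
    (hψsurj : SurjOn ψ (Icc a b) (Icc 0 1))
    (hsemi : ∀ x ∈ Icc a b, ψ (f x) = g (ψ x)) :
    InjOn ψ (Icc a b) ∧ StrictMonoOn ψ (Icc a b) ∧ BijOn ψ (Icc a b) (Icc 0 1) := by
  -- iterates of f stay in the interval
  have hfiter : ∀ m : ℕ, ∀ x ∈ Icc a b, f^[m] x ∈ Icc a b := by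
    intro m
    induction m with
    | zero => intro x hx; simpa using hx
    | succ m ih =>
      intro x hx
      rw [Function.iterate_succ_apply']
      exact hf (ih x hx)
  have horb : ∀ n : ℕ, f^[n] x₀ ∈ Icc a b := fun n => hfiter n x₀ hx₀
  -- iterated semiconjugacy
  have hsem' : ∀ x ∈ Icc a b, ∀ m : ℕ, ψ (f^[m] x) = g^[m] (ψ x) := by
    intro x hx m
    induction m with
    | zero => simp
    | succ m ih =>
      rw [Function.iterate_succ_apply', Function.iterate_succ_apply',
        hsemi _ (hfiter m x hx), ih]
  -- the set of orbit points
  set S : Set ℝ := Set.range fun n : ℕ => f^[n] x₀ with hS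
  have hScl : closure S = Icc a b := by
    apply Subset.antisymm
    · exact closure_minimal (range_subset_iff.mpr horb) isClosed_Icc
    · exact hdense
  -- the image of the orbit under ψ is dense in [0,1]
  have hdense01 : Icc (0:ℝ) 1 ⊆ closure (ψ '' S) := by
    intro y hy
    obtain ⟨x, hx, rfl⟩ := hψsurj hy
    have h1 : ψ '' closure S ⊆ closure (ψ '' S) := by
      apply ContinuousOn.image_closure
      rw [hScl]; exact hψc
    exact h1 ⟨x, by rw [hScl]; exact hx, rfl⟩
  -- key step : ψ cannot identify two distinct points
  have key : ∀ u v : ℝ, u ∈ Icc a b → v ∈ Icc a b → u < v → ψ u = ψ v → False := by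
    intro u v hu hv huv heq
    -- ψ is constant on [u,v]
    have hsub : Icc u v ⊆ Icc a b := Icc_subset_Icc hu.1 hv.2
    have hconst : ∀ x ∈ Icc u v, ψ x = ψ u := by
      intro x hx
      have h1 := hψm hu (hsub hx) hx.1
      have h2 := hψm (hsub hx) hv hx.2
      rw [← heq] at h2
      exact le_antisymm h2 h1
    -- the set of times the orbit visits (u,v) is infinite
    have hT : {n : ℕ | f^[n] x₀ ∈ Ioo u v}.Infinite := by
      apply Set.Infinite.of_image (fun n : ℕ => f^[n] x₀)
      have hIS : (Ioo u v ∩ S).Infinite := by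
        intro hfin
        have h1 : Ioo u v ⊆ closure (Ioo u v ∩ S) := by
          intro x hx
          exact isOpen_Ioo.inter_closure ⟨hx, hdense (hsub (Ioo_subset_Icc_self hx)) ⟩
        rw [hfin.isClosed.closure_eq] at h1
        exact Set.infinite_coe_iff.mp (Set.Ioo.infinite huv)
          (hfin.subset h1)
      apply hIS.mono
      rintro x ⟨hx1, n, rfl⟩
      exact ⟨n, hx1, rfl⟩
    -- two visit times
    obtain ⟨n₁, hn₁⟩ := hT.nonempty
    obtain ⟨n₂, hn₂, hlt⟩ := hT.exists_gt n₁
    set c : ℝ := ψ (f^[n₁] x₀) with hc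
    have hc1 : c = ψ u := hconst _ (Ioo_subset_Icc_self hn₁)
    -- c is periodic for g with period k = n₂ - n₁ > 0
    set k : ℕ := n₂ - n₁ with hk
    have hkpos : 0 < k := Nat.sub_pos_of_lt hlt
    have hper : Function.IsPeriodicPt g k c := by
      show g^[k] c = c
      rw [hc, ← hsem' _ (horb n₁) k, ← Function.iterate_add_apply,
        Nat.sub_add_cancel hlt.le]
      rw [hconst _ (Ioo_subset_Icc_self hn₂), hconst _ (Ioo_subset_Icc_self hn₁)]
    -- hence ψ '' S is finite
    have hfinS : (ψ '' S).Finite := by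
      have hsubF : ψ '' S ⊆ ((fun n : ℕ => ψ (f^[n] x₀)) '' Iic n₁) ∪
          ((fun m : ℕ => g^[m] c) '' Iio k) := by
        rintro y ⟨x, ⟨n, rfl⟩, rfl⟩
        rcases le_or_gt n n₁ with h | h
        · exact Or.inl ⟨n, h, rfl⟩
        · refine Or.inr ⟨(n - n₁) % k, Nat.mod_lt _ hkpos, ?_⟩
          show g^[(n - n₁) % k] c = ψ (f^[n] x₀)
          rw [hper.iterate_mod_apply, hc, ← hsem' _ (horb n₁),
            ← Function.iterate_add_apply, Nat.sub_add_cancel h.le]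
      exact Set.Finite.subset (((Set.finite_Iic n₁).image _).union
        ((Set.finite_Iio k).image _)) hsubF
    -- contradiction with density in the infinite set [0,1]
    have h01 : (Icc (0:ℝ) 1).Finite := by
      apply hfinS.subset
      rw [← hfinS.isClosed.closure_eq]
      exact hdense01
    exact Set.infinite_coe_iff.mp (Set.Ioo.infinite (show (0:ℝ) < 1 by norm_num))
      (h01.subset Ioo_subset_Icc_self)
  -- conclude
  have hinj : InjOn ψ (Icc a b) := by
    intro u hu v hv heq
    by_contra hne
    rcases lt_or_gt_of_ne hne with h | h
    · exact key u v hu hv h heq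
    · exact key v u hv hu h heq.symm
  have hsm : StrictMonoOn ψ (Icc a b) := by
    intro u hu v hv huv
    exact lt_of_le_of_ne (hψm hu hv huv.le) (fun h => absurd (hinj hu hv h) huv.ne)
  exact ⟨hinj, hsm, hψmaps, hinj, hψsurj⟩
end

section
/- Let n ≥ 0 and let f, g : [0,1] → [0,1] be continuous piecewise monotone maps of constant slopes α and β respectively, with α > β, and assume f has modality n (i.e., exactly n+1 laps). Then sup_{x ∈ [0,1]} |f(x) − g(x)| ≥ (α − β)/(2n + 2). -/
open Set

lemma stmt13_mono_aux {s : ℕ → ℝ} {N : ℕ} (h : ∀ j < N, s j < s (j + 1)) :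
    ∀ i j, i ≤ j → j ≤ N → s i ≤ s j := by
  intro i j hij hjN
  induction j with
  | zero =>
    have : i = 0 := Nat.le_zero.mp hij
    simp [this]
  | succ k ih =>
    rcases Nat.eq_or_lt_of_le hij with rfl | hlt
    · exact le_rfl
    · exact le_trans (ih (Nat.lt_succ_iff.mp hlt) (by omega))
        (le_of_lt (h k (by omega)))

lemma stmt13_lip_aux {g : ℝ → ℝ} {β : ℝ} (hβ : 0 ≤ β) :
    ∀ (r : ℕ) (s : ℕ → ℝ),
      (∀ j < r, s j < s (j + 1)) →
      (∀ j < r, ∀ u ∈ Icc (s j) (s (j + 1)), ∀ v ∈ Icc (s j) (s (j + 1)),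
        |g u - g v| = β * |u - v|) →
      ∀ u v, s 0 ≤ u → u ≤ v → v ≤ s r → |g u - g v| ≤ β * (v - u) := by
  intro r
  induction r with
  | zero =>
    intro s _ _ u v h1 h2 h3
    have huv : u = v := le_antisymm h2 (h3.trans h1)
    simp [huv]
  | succ r ih =>
    intro s hm hsl u v h1 h2 h3
    by_cases hv : v ≤ s r
    · exact ih s (fun j hj => hm j (by omega)) (fun j hj => hsl j (by omega)) u v h1 h2 hv
    · push_neg at hv
      by_cases hu : s r ≤ u
      · have hkey := hsl r (Nat.lt_succ_self r) u ⟨hu, h2.trans h3⟩ v ⟨hv.le, h3⟩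
        have : |g u - g v| = β * (v - u) := by
          rw [hkey, abs_sub_comm u v, abs_of_nonneg (by linarith : (0:ℝ) ≤ v - u)]
        exact this.le
      · push_neg at hu
        have h0r : s 0 ≤ s r := stmt13_mono_aux (fun j hj => hm j (by omega)) 0 r (by omega) le_rfl
        have h1' := ih s (fun j hj => hm j (by omega)) (fun j hj => hsl j (by omega)) u (s r) h1 hu.le le_rfl
        have h2' : |g (s r) - g v| = β * (v - s r) := by
          rw [hsl r (Nat.lt_succ_self r) (s r) ⟨le_rfl, le_of_lt (hm r (Nat.lt_succ_self r))⟩ v ⟨hv.le, h3⟩,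
            abs_sub_comm (s r) v, abs_of_nonneg (by linarith : (0:ℝ) ≤ v - s r)]
        calc |g u - g v| ≤ |g u - g (s r)| + |g (s r) - g v| := abs_sub_le _ _ _
          _ ≤ β * (s r - u) + β * (v - s r) := by linarith
          _ = β * (v - u) := by ring

/-- if `f, g : [0,1] → [0,1]` are continuous piecewise monotone maps of
constant slopes `α` and `β` respectively, with `α > β`, and `f` has modality `n`
(i.e. `n + 1` laps), then `sup_{x ∈ [0,1]} |f x − g x| ≥ (α − β)/(2n + 2)`. -/
theorem stmt_13 (n : ℕ) (f g : ℝ → ℝ) {α β : ℝ} (hαβ : β < α)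
    (hf : MapsTo f (Icc 0 1) (Icc 0 1))
    (hfc : ContinuousOn f (Icc 0 1))
    (hg : MapsTo g (Icc 0 1) (Icc 0 1))
    (hgc : ContinuousOn g (Icc 0 1))
    -- `f` has constant slope `α` and modality `n` (it has `n + 1` laps)
    (hfslope : ∃ s : ℕ → ℝ, s 0 = 0 ∧ s (n + 1) = 1 ∧
      (∀ j < n + 1, s j < s (j + 1)) ∧
      ∀ j < n + 1, ∀ u ∈ Icc (s j) (s (j + 1)), ∀ v ∈ Icc (s j) (s (j + 1)),
        |f u - f v| = α * |u - v|)
    -- `g` has constant slope `β`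
    (hgslope : ∃ (r : ℕ) (s : ℕ → ℝ), 0 < r ∧ s 0 = 0 ∧ s r = 1 ∧
      (∀ j < r, s j < s (j + 1)) ∧
      ∀ j < r, ∀ u ∈ Icc (s j) (s (j + 1)), ∀ v ∈ Icc (s j) (s (j + 1)),
        |g u - g v| = β * |u - v|) :
    (α - β) / (2 * n + 2) ≤ sSup ((fun x => |f x - g x|) '' Icc (0 : ℝ) 1) := by
  obtain ⟨s, hs0, hsN, hm, hsl⟩ := hfslope
  obtain ⟨r, t, hr, ht0, htr, htm, htl⟩ := hgslope
  -- β ≥ 0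
  have hβ : 0 ≤ β := by
    have h01 : t 0 < t 1 := htm 0 hr
    have hkey := htl 0 hr (t 0) ⟨le_rfl, h01.le⟩ (t 1) ⟨h01.le, le_rfl⟩
    have hpos : 0 < |t 0 - t 1| := abs_pos.mpr (sub_ne_zero.mpr h01.ne)
    nlinarith [abs_nonneg (g (t 0) - g (t 1))]
  -- pigeonhole: some lap of f has length ≥ 1/(n+1)
  have hsum : ∑ j ∈ Finset.range (n + 1), (s (j + 1) - s j) = 1 := by
    rw [Finset.sum_range_sub, hsN, hs0]; ring
  have hsum2 : ∑ j ∈ Finset.range (n + 1), (1 : ℝ) / (n + 1) = 1 := by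
    rw [Finset.sum_const, Finset.card_range, nsmul_eq_mul]
    push_cast
    field_simp
  obtain ⟨j, hjmem, hlen⟩ := Finset.exists_le_of_sum_le
    (Finset.nonempty_range_iff.mpr (Nat.succ_ne_zero n))
    (le_of_eq (hsum2.trans hsum.symm))
  have hj : j < n + 1 := Finset.mem_range.mp hjmem
  set a := s j with ha
  set b := s (j + 1) with hb
  have hab : a < b := hm j hj
  -- a, b ∈ [0,1]
  have ha0 : (0:ℝ) ≤ a := by
    rw [← hs0]; exact stmt13_mono_aux hm 0 j (by omega) (by omega)
  have hb1 : b ≤ 1 := by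
    rw [← hsN]; exact stmt13_mono_aux hm (j + 1) (n + 1) (by omega) le_rfl
  have hamem : a ∈ Icc (0:ℝ) 1 := ⟨ha0, le_trans hab.le hb1⟩
  have hbmem : b ∈ Icc (0:ℝ) 1 := ⟨le_trans ha0 hab.le, hb1⟩
  -- supremum bounds
  have hbdd : BddAbove ((fun x => |f x - g x|) '' Icc (0:ℝ) 1) := by
    refine ⟨1, ?_⟩
    rintro y ⟨x, hx, rfl⟩
    have hfx := hf hx
    have hgx := hg hx
    rw [abs_sub_le_iff]
    constructor <;> [skip; skip] <;>
      simp only [mem_Icc] at hfx hgx <;> linarith [hfx.1, hfx.2, hgx.1, hgx.2]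
  set M := sSup ((fun x => |f x - g x|) '' Icc (0:ℝ) 1) with hM
  have hMa : |f a - g a| ≤ M := le_csSup hbdd ⟨a, hamem, rfl⟩
  have hMb : |f b - g b| ≤ M := le_csSup hbdd ⟨b, hbmem, rfl⟩
  -- f on the lap
  have hfab : |f b - f a| = α * (b - a) := by
    have := hsl j hj b ⟨hab.le, le_rfl⟩ a ⟨le_rfl, hab.le⟩
    rw [this, abs_of_nonneg (by linarith)]
  -- g Lipschitz
  have hgab : |g a - g b| ≤ β * (b - a) := by
    apply stmt13_lip_aux hβ r t htm htl a b (by rw [ht0]; exact ha0) hab.le (by rw [htr]; exact hb1)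
  -- triangle
  have htri : α * (b - a) ≤ M + β * (b - a) + M := by
    have key : |f b - f a| ≤ |f b - g b| + |g b - g a| + |g a - f a| := by
      have : f b - f a = (f b - g b) + (g b - g a) + (g a - f a) := by ring
      rw [this]
      calc |f b - g b + (g b - g a) + (g a - f a)|
          ≤ |f b - g b + (g b - g a)| + |g a - f a| := abs_add_le _ _
        _ ≤ |f b - g b| + |g b - g a| + |g a - f a| := by
            linarith [abs_add_le (f b - g b) (g b - g a)]
    rw [hfab] at key
    rw [abs_sub_comm (g b) (g a)] at key
    rw [abs_sub_comm (g a) (f a)] at key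
    linarith
  -- conclude
  have hn : (0:ℝ) < (n:ℝ) + 1 := by positivity
  have h1 : (α - β) * (b - a) ≤ 2 * M := by linarith
  have h2 : (1:ℝ) / (n + 1) ≤ b - a := hlen
  have h3 : (α - β) / (n + 1) ≤ 2 * M := by
    calc (α - β) / (n + 1) = (α - β) * (1 / (n + 1)) := by ring
      _ ≤ (α - β) * (b - a) := mul_le_mul_of_nonneg_left h2 (by linarith)
      _ ≤ 2 * M := h1
  rw [div_le_iff₀ hn] at h3
  rw [div_le_iff₀ (by positivity : (0:ℝ) < 2 * n + 2)]
  linarith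
end

section
/- Let n ≥ 0 and let f, g : [0,1] → [0,1] be continuous piecewise monotone maps of constant slopes α and β respectively, each having at most n+1 laps. Then |α − β| ≤ (2n + 2)·sup_{x ∈ [0,1]} |f(x) − g(x)|. In particular, on the space of continuous piecewise monotone maps of [0,1] with at most n+1 laps and constant slope, the slope depends Lipschitz-continuously on the map in the uniform metric. -/
open Set




private lemma aux_s_nonneg (k : ℕ) (s : ℕ → ℝ) (h0 : s 0 = 0)
    (hmono : ∀ j < k, s j < s (j + 1)) : ∀ j ≤ k, 0 ≤ s j := by
  intro j hj
  induction j with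
  | zero => simp [h0]
  | succ j ih =>
    have hjk : j < k := hj
    exact le_trans (ih hjk.le) (hmono j hjk).le

private lemma aux_s_mono (k : ℕ) (s : ℕ → ℝ)
    (hmono : ∀ j < k, s j < s (j + 1)) : ∀ i j, i ≤ j → j ≤ k → s i ≤ s j := by
  intro i j hij hjk
  induction j with
  | zero => simp [Nat.le_zero.mp hij]
  | succ j ih =>
    rcases Nat.lt_or_ge i (j+1) with h | h
    · exact le_trans (ih (Nat.lt_succ_iff.mp h) (Nat.le_of_succ_le hjk))
        (hmono j hjk).le
    · have : i = j + 1 := le_antisymm hij h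
      simp [this]

private lemma aux_lip (k : ℕ) (s : ℕ → ℝ) (g : ℝ → ℝ) (β : ℝ)
    (h0 : s 0 = 0)
    (hmono : ∀ j < k, s j < s (j + 1))
    (hs : ∀ j < k, ∀ u ∈ Icc (s j) (s (j + 1)), ∀ v ∈ Icc (s j) (s (j + 1)),
        |g u - g v| = β * |u - v|) :
    ∀ j ≤ k, ∀ u v : ℝ, 0 ≤ u → u ≤ v → v ≤ s j → |g v - g u| ≤ β * (v - u) := by
  intro j hj
  induction j with
  | zero =>
    intro u v hu huv hv
    rw [h0] at hv
    have : u = v := le_antisymm huv (le_trans hv hu)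
    simp [this]
  | succ j ih =>
    intro u v hu huv hv
    have hjk : j < k := hj
    have hsj0 : 0 ≤ s j := aux_s_nonneg k s h0 hmono j hjk.le
    rcases le_or_gt v (s j) with h | h
    · exact ih hjk.le u v hu huv h
    · rcases le_or_gt (s j) u with h' | h'
      · have := hs j hjk v ⟨le_trans h' huv, hv⟩ u ⟨h', le_trans huv hv⟩
        rw [this, abs_of_nonneg (by linarith)]
      · have h1 : |g v - g (s j)| = β * (v - s j) := by
          have heq := hs j hjk v ⟨h.le, hv⟩ (s j) ⟨le_refl _, (hmono j hjk).le⟩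
          rwa [show |v - s j| = v - s j from abs_of_nonneg (by linarith)] at heq
        have h2 : |g (s j) - g u| ≤ β * (s j - u) :=
          ih hjk.le u (s j) hu h'.le (le_refl _)
        calc |g v - g u| ≤ |g v - g (s j)| + |g (s j) - g u| := abs_sub_le _ _ _
          _ ≤ β * (v - s j) + β * (s j - u) := by rw [h1]; linarith
          _ = β * (v - u) := by ring

private lemma aux_key (n : ℕ) (f g : ℝ → ℝ) (α β ε : ℝ)
    (hfslope : ∃ (k : ℕ) (s : ℕ → ℝ), 0 < k ∧ k ≤ n + 1 ∧ s 0 = 0 ∧ s k = 1 ∧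
      (∀ j < k, s j < s (j + 1)) ∧
      ∀ j < k, ∀ u ∈ Icc (s j) (s (j + 1)), ∀ v ∈ Icc (s j) (s (j + 1)),
        |f u - f v| = α * |u - v|)
    (hglip : ∀ u ∈ Icc (0:ℝ) 1, ∀ v ∈ Icc (0:ℝ) 1, |g u - g v| ≤ β * |u - v|)
    (hε : ∀ x ∈ Icc (0:ℝ) 1, |f x - g x| ≤ ε) :
    α - β ≤ (2 * n + 2) * ε := by
  obtain ⟨k, s, hk, hkn, h0, h1, hmono, hs⟩ := hfslope
  have hsnn := aux_s_nonneg k s h0 hmono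
  have hsmono := aux_s_mono k s hmono
  have hsIcc : ∀ j ≤ k, s j ∈ Icc (0:ℝ) 1 := fun j hj =>
    ⟨hsnn j hj, by rw [← h1]; exact hsmono j k hj le_rfl⟩
  have hεnn : 0 ≤ ε := le_trans (abs_nonneg _) (hε 0 ⟨le_refl _, zero_le_one⟩)
  have htel : ∑ j ∈ Finset.range k, (s (j+1) - s j) = 1 := by
    rw [Finset.sum_range_sub]; rw [h1, h0]; ring
  have hα : α = ∑ j ∈ Finset.range k, |f (s (j+1)) - f (s j)| := by
    have : ∀ j ∈ Finset.range k, |f (s (j+1)) - f (s j)| = α * (s (j+1) - s j) := by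
      intro j hj
      have hjk : j < k := Finset.mem_range.mp hj
      have heq := hs j hjk (s (j+1)) ⟨(hmono j hjk).le, le_refl _⟩ (s j) ⟨le_refl _, (hmono j hjk).le⟩
      rw [show |s (j+1) - s j| = s (j+1) - s j from
        abs_of_nonneg (by linarith [hmono j hjk])] at heq
      exact heq
    rw [Finset.sum_congr rfl this, ← Finset.mul_sum, htel, mul_one]
  have hterm : ∀ j ∈ Finset.range k,
      |f (s (j+1)) - f (s j)| ≤ β * (s (j+1) - s j) + 2 * ε := by
    intro j hj
    have hjk : j < k := Finset.mem_range.mp hj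
    have hj1 : s (j+1) ∈ Icc (0:ℝ) 1 := hsIcc (j+1) hjk
    have hj0 : s j ∈ Icc (0:ℝ) 1 := hsIcc j hjk.le
    have hgd : |g (s (j+1)) - g (s j)| ≤ β * (s (j+1) - s j) := by
      have hle := hglip (s (j+1)) hj1 (s j) hj0
      rwa [show |s (j+1) - s j| = s (j+1) - s j from
        abs_of_nonneg (by linarith [hmono j hjk])] at hle
    calc |f (s (j+1)) - f (s j)|
        ≤ |f (s (j+1)) - g (s (j+1))| + |g (s (j+1)) - g (s j)| + |g (s j) - f (s j)| := by
          have := abs_sub_le (f (s (j+1))) (g (s (j+1))) (f (s j))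
          have := abs_sub_le (g (s (j+1))) (g (s j)) (f (s j))
          linarith
      _ ≤ ε + (β * (s (j+1) - s j)) + ε := by
          have h1' := hε (s (j+1)) hj1
          have h2' := hε (s j) hj0
          rw [abs_sub_comm (g (s j))] at *
          linarith
      _ = β * (s (j+1) - s j) + 2 * ε := by ring
  have hsum : α ≤ β + 2 * k * ε := by
    rw [hα]
    calc ∑ j ∈ Finset.range k, |f (s (j+1)) - f (s j)|
        ≤ ∑ j ∈ Finset.range k, (β * (s (j+1) - s j) + 2 * ε) := Finset.sum_le_sum hterm
      _ = β * (∑ j ∈ Finset.range k, (s (j+1) - s j)) + k * (2 * ε) := by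
          rw [Finset.sum_add_distrib, ← Finset.mul_sum, Finset.sum_const, Finset.card_range,
            nsmul_eq_mul]
      _ = β + 2 * k * ε := by rw [htel]; ring
  have hkn' : (k : ℝ) ≤ n + 1 := by exact_mod_cast hkn
  nlinarith [hεnn]

/-- if `f, g : [0,1] → [0,1]` are continuous piecewise monotone maps of
constant slopes `α` and `β` respectively, each having at most `n + 1` laps, then
`|α − β| ≤ (2n + 2) · sup_{x ∈ [0,1]} |f x − g x|`; i.e. the slope depends
Lipschitz-continuously on the map in the uniform metric. -/
theorem stmt_14 (n : ℕ) (f g : ℝ → ℝ) {α β : ℝ}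
    (hf : MapsTo f (Icc 0 1) (Icc 0 1))
    (hfc : ContinuousOn f (Icc 0 1))
    (hg : MapsTo g (Icc 0 1) (Icc 0 1))
    (hgc : ContinuousOn g (Icc 0 1))
    -- `f` has constant slope `α` with at most `n + 1` laps
    (hfslope : ∃ (k : ℕ) (s : ℕ → ℝ), 0 < k ∧ k ≤ n + 1 ∧ s 0 = 0 ∧ s k = 1 ∧
      (∀ j < k, s j < s (j + 1)) ∧
      ∀ j < k, ∀ u ∈ Icc (s j) (s (j + 1)), ∀ v ∈ Icc (s j) (s (j + 1)),
        |f u - f v| = α * |u - v|)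
    -- `g` has constant slope `β` with at most `n + 1` laps
    (hgslope : ∃ (k : ℕ) (s : ℕ → ℝ), 0 < k ∧ k ≤ n + 1 ∧ s 0 = 0 ∧ s k = 1 ∧
      (∀ j < k, s j < s (j + 1)) ∧
      ∀ j < k, ∀ u ∈ Icc (s j) (s (j + 1)), ∀ v ∈ Icc (s j) (s (j + 1)),
        |g u - g v| = β * |u - v|) :
    |α - β| ≤ (2 * n + 2) * sSup ((fun x => |f x - g x|) '' Icc (0 : ℝ) 1) := by
  set ε := sSup ((fun x => |f x - g x|) '' Icc (0 : ℝ) 1) with hεdef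
  have hbdd : BddAbove ((fun x => |f x - g x|) '' Icc (0 : ℝ) 1) := by
    refine ⟨1, ?_⟩
    rintro y ⟨x, hx, rfl⟩
    have hfx := hf hx
    have hgx := hg hx
    rw [abs_sub_le_iff]
    constructor <;> simp only [mem_Icc] at hfx hgx <;> linarith
  have hε : ∀ x ∈ Icc (0:ℝ) 1, |f x - g x| ≤ ε := fun x hx =>
    le_csSup hbdd ⟨x, hx, rfl⟩
  -- Lipschitz bounds from slope data
  have mklip : ∀ (h : ℝ → ℝ) (γ : ℝ),
      (∃ (k : ℕ) (s : ℕ → ℝ), 0 < k ∧ k ≤ n + 1 ∧ s 0 = 0 ∧ s k = 1 ∧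
        (∀ j < k, s j < s (j + 1)) ∧
        ∀ j < k, ∀ u ∈ Icc (s j) (s (j + 1)), ∀ v ∈ Icc (s j) (s (j + 1)),
          |h u - h v| = γ * |u - v|) →
      ∀ u ∈ Icc (0:ℝ) 1, ∀ v ∈ Icc (0:ℝ) 1, |h u - h v| ≤ γ * |u - v| := by
    rintro h γ ⟨k, s, hk, hkn, h0, h1, hmono, hsl⟩ u hu v hv
    have lip := aux_lip k s h γ h0 hmono hsl k le_rfl
    rcases le_total u v with huv | huv
    · have hle := lip u v hu.1 huv (h1 ▸ hv.2)
      rw [abs_sub_comm, show |u - v| = v - u from by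
        rw [abs_sub_comm]; exact abs_of_nonneg (by linarith)]
      exact hle
    · have hle := lip v u hv.1 huv (h1 ▸ hu.2)
      rw [show |u - v| = u - v from abs_of_nonneg (by linarith)]
      exact hle
  have hflip := mklip f α hfslope
  have hglip := mklip g β hgslope
  have h1 : α - β ≤ (2 * n + 2) * ε :=
    aux_key n f g α β ε hfslope hglip hε
  have h2 : β - α ≤ (2 * n + 2) * ε := by
    refine aux_key n g f β α ε hgslope hflip ?_
    intro x hx
    rw [abs_sub_comm]
    exact hε x hx
  rw [abs_sub_le_iff]
  exact ⟨h1, h2⟩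
end
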